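/- Let L be an n-dimensional vector space over ℂ (n ≥ 9) with basis e_1,…,e_n and bracket [e_i,e_1] = e_{i+1} for 1 ≤ i ≤ n-1, i ≠ n-3, [e_1,e_{n-2}] = -e_{n-1}, [e_2,e_{n-2}] = -(1+λ) e_n, [e_1, e_{n-1}] = λ e_n, all other basis products zero, for λ ∈ ℂ. Then L is a (right) Leibniz algebra (the algebra L^{38}_{(0,0,λ)}). -/

import Mathlib

/-!
Both sides of the Leibniz identity are linear in each argument, so it suffices to check it on
basis triples `(eᵢ, eⱼ, eₖ)`. Right multiplication by `eₖ` vanishes unless `k ∈ {1, n-2, n-1}`;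
this settles every triple except those with `j, k ∈ {1, n-2, n-1}`, which are checked directly.
The coefficients only interact for `(i, j, k) = (1, n-2, 1)`, where
`[e₁, [e_{n-2}, e₁]] = λeₙ = -eₙ + (1+λ)eₙ = [[e₁, e_{n-2}], e₁] - [[e₁, e₁], e_{n-2}]`.
-/

section LeibnizOfSpan

variable {R M : Type*} [CommRing R] [AddCommGroup M] [Module R M]

theorem leibniz_of_span_eq_top (br : M →ₗ[R] M →ₗ[R] M) {s : Set M}
    (hs : Submodule.span R s = ⊤)
    (h : ∀ x ∈ s, ∀ y ∈ s, ∀ z ∈ s, br x (br y z) = br (br x y) z - br (br x z) y) :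
    ∀ x y z : M, br x (br y z) = br (br x y) z - br (br x z) y := by
  have hxy : ∀ x ∈ s, ∀ y ∈ s, ∀ z, br x (br y z) = br (br x y) z - br (br x z) y :=
    fun x hx y hy => LinearMap.congr_fun <|
      LinearMap.ext_on (f := (br x).comp (br y)) (g := br (br x y) - (br.flip y).comp (br x)) hs
        fun z hz => h x hx y hy z hz
  have hx : ∀ x ∈ s, ∀ y z, br x (br y z) = br (br x y) z - br (br x z) y :=
    fun x hx y z => LinearMap.congr_fun (LinearMap.ext_on
      (f := (br x).comp (br.flip z)) (g := (br.flip z).comp (br x) - br (br x z)) hs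
        fun y hy => hxy x hx y hy z) y
  intro x y z
  exact LinearMap.congr_fun (LinearMap.ext_on
    (f := br.flip (br y z)) (g := (br.flip z).comp (br.flip y) - (br.flip y).comp (br.flip z)) hs
      fun x hxs => hx x hxs y z) x

end LeibnizOfSpan

section L38

variable {L : Type*} [AddCommGroup L] [Module ℂ L]

/-- The product `[eᵢ, eⱼ]` of `L³⁸_{(0,0,λ)}`, for `1 ≤ i, j ≤ n`. -/
def l38Bracket (n : ℕ) (lam : ℂ) (e : ℕ → L) (i j : ℕ) : L :=
  if j = 1 ∧ i ≤ n - 1 ∧ i ≠ n - 3 then e (i + 1)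
  else if i = 1 ∧ j = n - 2 then -e (n - 1)
  else if i = 2 ∧ j = n - 2 then -(1 + lam) • e n
  else if i = 1 ∧ j = n - 1 then lam • e n
  else 0

theorem bracket_eq_l38Bracket {n : ℕ} {e : ℕ → L} {lam : ℂ} {br : L →ₗ[ℂ] L →ₗ[ℂ] L}
    (hchain : ∀ i : ℕ, 1 ≤ i → i ≤ n - 1 → i ≠ n - 3 → br (e i) (e 1) = e (i + 1))
    (h1 : br (e 1) (e (n - 2)) = -e (n - 1))
    (h2 : br (e 2) (e (n - 2)) = -(1 + lam) • e n)
    (h3 : br (e 1) (e (n - 1)) = lam • e n)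
    (hzero : ∀ i j : ℕ, 1 ≤ i → i ≤ n → 1 ≤ j → j ≤ n →
      ¬(j = 1 ∧ i ≤ n - 1 ∧ i ≠ n - 3) → ¬(j = n - 2 ∧ (i = 1 ∨ i = 2)) →
      ¬(j = n - 1 ∧ i = 1) → br (e i) (e j) = 0)
    {i j : ℕ} (hi1 : 1 ≤ i) (hi2 : i ≤ n) (hj1 : 1 ≤ j) (hj2 : j ≤ n) :
    br (e i) (e j) = l38Bracket n lam e i j := by
  unfold l38Bracket
  split_ifs with hshift h1' h2' h3'
  · obtain ⟨rfl, hle, hne⟩ := hshift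
    exact hchain i hi1 hle hne
  · obtain ⟨rfl, rfl⟩ := h1'
    exact h1
  · obtain ⟨rfl, rfl⟩ := h2'
    exact h2
  · obtain ⟨rfl, rfl⟩ := h3'
    exact h3
  · exact hzero i j hi1 hi2 hj1 hj2 (by tauto) (by tauto) (by tauto)

theorem l38_right_mul_eq_zero {n : ℕ} {e : ℕ → L} {lam : ℂ} {br : L →ₗ[ℂ] L →ₗ[ℂ] L}
    (hspan : Submodule.span ℂ (e '' Set.Icc 1 n) = ⊤)
    (hbr : ∀ i j, 1 ≤ i → i ≤ n → 1 ≤ j → j ≤ n → br (e i) (e j) = l38Bracket n lam e i j)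
    {k : ℕ} (hk1 : 1 ≤ k) (hk2 : k ≤ n) (hk : k ≠ 1 ∧ k ≠ n - 2 ∧ k ≠ n - 1) (x : L) :
    br x (e k) = 0 := by
  suffices br.flip (e k) = 0 from LinearMap.congr_fun this x
  refine LinearMap.ext_on hspan ?_
  rintro _ ⟨i, ⟨hi1, hi2⟩, rfl⟩
  simp only [LinearMap.flip_apply, LinearMap.zero_apply, hbr i k hi1 hi2 hk1 hk2, l38Bracket]
  rw [if_neg (by omega), if_neg (by omega), if_neg (by omega), if_neg (by omega)]

theorem l38_leibniz_basis {n : ℕ} (hn : 5 ≤ n) {e : ℕ → L} {lam : ℂ}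
    {br : L →ₗ[ℂ] L →ₗ[ℂ] L}
    (hspan : Submodule.span ℂ (e '' Set.Icc 1 n) = ⊤)
    (hbr : ∀ i j, 1 ≤ i → i ≤ n → 1 ≤ j → j ≤ n → br (e i) (e j) = l38Bracket n lam e i j)
    {i j k : ℕ} (hi1 : 1 ≤ i) (hi2 : i ≤ n) (hj1 : 1 ≤ j) (hj2 : j ≤ n) (hk1 : 1 ≤ k)
    (hk2 : k ≤ n) :
    br (e i) (br (e j) (e k)) = br (br (e i) (e j)) (e k) - br (br (e i) (e k)) (e j) := by
  have hR := fun k hk1 hk2 hk => l38_right_mul_eq_zero (k := k) hspan hbr hk1 hk2 hk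
  by_cases hk : k ≠ 1 ∧ k ≠ n - 2 ∧ k ≠ n - 1
  · simp only [hR k hk1 hk2 hk, map_zero, LinearMap.zero_apply, sub_zero]
  by_cases hj : j ≠ 1 ∧ j ≠ n - 2 ∧ j ≠ n - 1
  -- then `[eⱼ, eₖ]` is `0`, a multiple of `eₙ`, or `e_{j+1}` with `j + 1 ∉ {1, n-2, n-1}`
  · rw [hR j hj1 hj2 hj, hR j hj1 hj2 hj, map_zero, LinearMap.zero_apply, sub_zero,
      hbr j k hj1 hj2 hk1 hk2, l38Bracket]
    split_ifs
    all_goals simp (disch := omega) only [map_neg, map_smul, map_zero, hR, neg_zero, smul_zero]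
  have hnn : n - 1 + 1 = n := by omega
  simp only [not_and_or, not_not] at hj hk
  rcases hj with rfl | rfl | rfl <;> rcases hk with rfl | rfl | rfl <;>
    simp (disch := omega) only [hbr, l38Bracket, if_pos, if_neg, hnn, map_zero, sub_self,
      and_true, true_and] <;>
    split_ifs <;>
    simp (disch := omega) only [hbr, l38Bracket, if_pos, if_neg, hnn, map_neg, map_smul,
      map_zero, LinearMap.neg_apply, LinearMap.smul_apply, LinearMap.zero_apply, sub_self,
      and_true, true_and, sub_zero, zero_sub, neg_zero, smul_zero, neg_neg] <;>
    first
    | rfl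
    | (exfalso; omega)
    | module

end L38

theorem L38_is_leibniz_general
    {L : Type*} [AddCommGroup L] [Module ℂ L]
    (n : ℕ) (hn : 9 ≤ n) (e : ℕ → L) (lam : ℂ)
    (hspan : Submodule.span ℂ (e '' Set.Icc 1 n) = ⊤)
    (br : L →ₗ[ℂ] L →ₗ[ℂ] L)
    (hchain : ∀ i : ℕ, 1 ≤ i → i ≤ n - 1 → i ≠ n - 3 →
      br (e i) (e 1) = e (i + 1))
    (h1 : br (e 1) (e (n - 2)) = -e (n - 1))
    (h2 : br (e 2) (e (n - 2)) = -(1 + lam) • e n)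
    (h3 : br (e 1) (e (n - 1)) = lam • e n)
    (hzero : ∀ i j : ℕ, 1 ≤ i → i ≤ n → 1 ≤ j → j ≤ n →
      ¬(j = 1 ∧ i ≤ n - 1 ∧ i ≠ n - 3) →
      ¬(j = n - 2 ∧ (i = 1 ∨ i = 2)) →
      ¬(j = n - 1 ∧ i = 1) →
      br (e i) (e j) = 0) :
    ∀ x y z : L, br x (br y z) = br (br x y) z - br (br x z) y := by
  have hbr : ∀ i j, 1 ≤ i → i ≤ n → 1 ≤ j → j ≤ n → br (e i) (e j) = l38Bracket n lam e i j :=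
    fun i j hi1 hi2 hj1 hj2 => bracket_eq_l38Bracket hchain h1 h2 h3 hzero hi1 hi2 hj1 hj2
  refine leibniz_of_span_eq_top br hspan ?_
  rintro _ ⟨i, ⟨hi1, hi2⟩, rfl⟩ _ ⟨j, ⟨hj1, hj2⟩, rfl⟩ _ ⟨k, ⟨hk1, hk2⟩, rfl⟩
  exact l38_leibniz_basis (by omega) hspan hbr hi1 hi2 hj1 hj2 hk1 hk2

/-- The `n`-dimensional algebra (`n ≥ 9`) over `ℂ` with basis `e₁,…,eₙ` and
nonzero products `[eᵢ,e₁] = e_{i+1}` (`1 ≤ i ≤ n-1`, `i ≠ n-3`),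
`[e₁,e_{n-2}] = -e_{n-1}`, `[e₂,e_{n-2}] = -(1+λ)eₙ`, `[e₁,e_{n-1}] = λ eₙ`
is a (right) Leibniz algebra (the algebra `L³⁸_{(0,0,λ)}`). -/
theorem L38_is_leibniz
    {L : Type*} [AddCommGroup L] [Module ℂ L]
    (n : ℕ) (hn : 9 ≤ n) (e : ℕ → L) (lam : ℂ)
    (hli : LinearIndependent ℂ (fun i : Fin n => e ((i : ℕ) + 1)))
    (hspan : Submodule.span ℂ (e '' Set.Icc 1 n) = ⊤)
    (br : L →ₗ[ℂ] L →ₗ[ℂ] L)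
    (hchain : ∀ i : ℕ, 1 ≤ i → i ≤ n - 1 → i ≠ n - 3 →
      br (e i) (e 1) = e (i + 1))
    (h1 : br (e 1) (e (n - 2)) = -e (n - 1))
    (h2 : br (e 2) (e (n - 2)) = -(1 + lam) • e n)
    (h3 : br (e 1) (e (n - 1)) = lam • e n)
    (hzero : ∀ i j : ℕ, 1 ≤ i → i ≤ n → 1 ≤ j → j ≤ n →
      ¬(j = 1 ∧ i ≤ n - 1 ∧ i ≠ n - 3) →
      ¬(j = n - 2 ∧ (i = 1 ∨ i = 2)) →
      ¬(j = n - 1 ∧ i = 1) →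
      br (e i) (e j) = 0) :
    ∀ x y z : L, br x (br y z) = br (br x y) z - br (br x z) y :=
  L38_is_leibniz_general n hn e lam hspan br hchain h1 h2 h3 hzero
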